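/- Let N ≥ 1 be an integer, let n > 0 be a real number, let R > 0. Let H₀ > 0 and set T := 2R^{n+2}/(n(n+1)H₀). Then there exist no C¹ functions ρ, V : [0,T] × [0,∞) → ℝ such that: (i) ρ(t,r) ≥ 0 for all t, r; (ii) ρ(t,r) = 0 and V(t,r) = 0 whenever r ≥ R (compact support / non-slip boundary condition); (iii) for all t ∈ [0,T] and 0 < r < R the pressureless radial momentum equation with repulsive force holds: ∂ₜV(t,r) + V(t,r)·∂ᵣV(t,r) = α(N)·r^{1−N}·∫₀^r ρ(t,s) s^{N−1} ds; (iv) ∫₀^R r^n V(0,r) dr = H₀. In other words, such a solution blows up on or before the finite time T = 2R^{n+2}/(n(n+1)H₀). -/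

import Mathlib

/-!
Let `H(t) = ∫₀^R rⁿ V(t,r) dr`. Along the momentum equation the repulsive force is
nonnegative, so `H' ≥ -∫₀^R rⁿ V ∂ᵣV dr = (n/2) ∫₀^R r^(n-1) V² dr`, integrating by parts
with `V(t,R) = 0`. Cauchy–Schwarz for the weight `r^(n-1)` against
`∫₀^R r^(n+1) dr = R^(n+2)/(n+2)` turns this into the Riccati inequality `H' ≥ c H²` with
`c = n(n+2)/(2R^(n+2))`, whose solutions with `H(0) = H₀ > 0` cannot exist past time
`1/(c H₀) = 2R^(n+2)/(n(n+2)H₀) < T`.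
-/

open MeasureTheory Set Topology Filter Function

/-- The constant `α(N)`: `α(1) = 1`, `α(2) = 2π`, and
`α(N) = N(N−2)·π^{N/2}/Γ(N/2+1)` for `N ≥ 3`. -/
noncomputable def alphaConst (N : ℕ) : ℝ :=
  if N = 1 then 1
  else if N = 2 then 2 * Real.pi
  else (N : ℝ) * ((N : ℝ) - 2) * Real.pi ^ ((N : ℝ) / 2) / Real.Gamma ((N : ℝ) / 2 + 1)

theorem ContDiffOn.hasFDerivAt_fderivWithin {𝕜 E F : Type*} [NontriviallyNormedField 𝕜]
    [NormedAddCommGroup E] [NormedSpace 𝕜 E] [NormedAddCommGroup F] [NormedSpace 𝕜 F]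
    {f : E → F} {s : Set E} {x : E} (hf : ContDiffOn 𝕜 1 f s) (hs : s ∈ 𝓝 x) :
    HasFDerivAt f (fderivWithin 𝕜 f s x) x := by
  rw [fderivWithin_of_mem_nhds hs]
  exact (hf.differentiableOn one_ne_zero).hasFDerivAt hs

theorem HasFDerivAt.hasDerivAt_uncurry_left {f : ℝ → ℝ → ℝ} {L : ℝ × ℝ →L[ℝ] ℝ} {t r : ℝ}
    (h : HasFDerivAt (uncurry f) L (t, r)) : HasDerivAt (fun τ => f τ r) (L (1, 0)) t :=
  h.comp_hasDerivAt_of_eq t ((hasDerivAt_id t).prodMk (hasDerivAt_const t r)) rfl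

theorem HasFDerivAt.hasDerivAt_uncurry_right {f : ℝ → ℝ → ℝ} {L : ℝ × ℝ →L[ℝ] ℝ} {t r : ℝ}
    (h : HasFDerivAt (uncurry f) L (t, r)) : HasDerivAt (f t) (L (0, 1)) r :=
  h.comp_hasDerivAt_of_eq r ((hasDerivAt_const r t).prodMk (hasDerivAt_id r)) rfl

theorem continuousOn_intervalIntegral_of_continuousOn_prod {F : ℝ → ℝ → ℝ} {s : Set ℝ}
    {a b : ℝ} (hs : IsCompact s) (hab : a ≤ b) (hF : ContinuousOn (uncurry F) (s ×ˢ Icc a b)) :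
    ContinuousOn (fun t => ∫ r in a..b, F t r) s := by
  obtain ⟨M, hM⟩ := (hs.prod isCompact_Icc).exists_bound_of_continuousOn hF
  have hIoc : uIoc a b ⊆ Icc a b := uIoc_of_le hab ▸ Ioc_subset_Icc_self
  intro t₀ ht₀
  refine intervalIntegral.continuousWithinAt_of_dominated_interval (bound := fun _ => M) ?_ ?_
    intervalIntegrable_const (Eventually.of_forall fun r hr => ?_)
  · filter_upwards [self_mem_nhdsWithin] with t ht
    exact ((hF.uncurry_left t ht).mono hIoc).aestronglyMeasurable measurableSet_uIoc
  · filter_upwards [self_mem_nhdsWithin] with t ht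
    exact Eventually.of_forall fun r hr => hM (t, r) ⟨ht, hIoc hr⟩
  · exact hF.uncurry_right r (hIoc hr) t₀ ht₀

theorem hasDerivAt_intervalIntegral_of_continuousOn_prod {F F' : ℝ → ℝ → ℝ} {s : Set ℝ}
    {a b t₀ : ℝ} (hs : IsCompact s) (hst : s ∈ 𝓝 t₀) (hab : a ≤ b)
    (hF : ContinuousOn (uncurry F) (s ×ˢ Icc a b))
    (hF' : ContinuousOn (uncurry F') (s ×ˢ Icc a b))
    (hderiv : ∀ᶠ t in 𝓝 t₀, ∀ r ∈ Ioc a b, HasDerivAt (F · r) (F' t r) t) :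
    HasDerivAt (fun t => ∫ r in a..b, F t r) (∫ r in a..b, F' t₀ r) t₀ := by
  obtain ⟨M, hM⟩ := (hs.prod isCompact_Icc).exists_bound_of_continuousOn hF'
  have hIoc : uIoc a b ⊆ Icc a b := uIoc_of_le hab ▸ Ioc_subset_Icc_self
  have ht₀ : t₀ ∈ s := mem_of_mem_nhds hst
  refine (intervalIntegral.hasDerivAt_integral_of_dominated_loc_of_deriv_le
    (bound := fun _ => M) (inter_mem hst hderiv) ?_ ?_ ?_ ?_ intervalIntegrable_const ?_).2
  · filter_upwards [hst] with t ht
    exact ((hF.uncurry_left t ht).mono hIoc).aestronglyMeasurable measurableSet_uIoc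
  · exact (hF.uncurry_left t₀ ht₀).intervalIntegrable_of_Icc hab
  · exact ((hF'.uncurry_left t₀ ht₀).mono hIoc).aestronglyMeasurable measurableSet_uIoc
  · exact Eventually.of_forall fun r hr t ht => hM (t, r) ⟨ht.1, hIoc hr⟩
  · exact Eventually.of_forall fun r hr t ht => ht.2 r (uIoc_of_le hab ▸ hr)

theorem sq_intervalIntegral_mul_le_of_nonneg_weight {w f g : ℝ → ℝ} {a b : ℝ} (hab : a ≤ b)
    (hw : ∀ x ∈ Icc a b, 0 ≤ w x)
    (hff : IntervalIntegrable (fun x => w x * f x ^ 2) volume a b)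
    (hfg : IntervalIntegrable (fun x => w x * (f x * g x)) volume a b)
    (hgg : IntervalIntegrable (fun x => w x * g x ^ 2) volume a b) :
    (∫ x in a..b, w x * (f x * g x)) ^ 2 ≤
      (∫ x in a..b, w x * f x ^ 2) * ∫ x in a..b, w x * g x ^ 2 := by
  have hquad : ∀ k : ℝ, 0 ≤ (∫ x in a..b, w x * f x ^ 2) * (k * k)
      + (-2 * ∫ x in a..b, w x * (f x * g x)) * k + ∫ x in a..b, w x * g x ^ 2 := by
    intro k
    have hexpand : (fun x => w x * (k * f x - g x) ^ 2) = fun x =>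
        k * k * (w x * f x ^ 2) + -2 * k * (w x * (f x * g x)) + w x * g x ^ 2 := by
      ext x; ring
    calc 0 ≤ ∫ x in a..b, w x * (k * f x - g x) ^ 2 :=
          intervalIntegral.integral_nonneg hab fun x hx => mul_nonneg (hw x hx) (sq_nonneg _)
      _ = _ := by
          rw [hexpand,
            intervalIntegral.integral_add ((hff.const_mul _).add (hfg.const_mul _)) hgg,
            intervalIntegral.integral_add (hff.const_mul _) (hfg.const_mul _),
            intervalIntegral.integral_const_mul, intervalIntegral.integral_const_mul]
          ring
  have := discrim_le_zero hquad
  rw [discrim] at this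
  linarith

theorem integral_rpow_mul_mul_deriv_eq {v v' : ℝ → ℝ} {n R : ℝ} (hn : 0 < n) (hR : 0 ≤ R)
    (hv : ContinuousOn v (Icc 0 R)) (hv' : ContinuousOn v' (Icc 0 R))
    (hderiv : ∀ r ∈ Ioo 0 R, HasDerivAt v (v' r) r) (hvR : v R = 0) :
    ∫ r in 0..R, r ^ n * (v r * v' r) = -(n / 2) * ∫ r in 0..R, r ^ (n - 1) * v r ^ 2 := by
  have hIcc : uIcc 0 R = Icc 0 R := uIcc_of_le hR
  have hA : IntervalIntegrable (fun r => r ^ (n - 1) * v r ^ 2) volume 0 R :=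
    (intervalIntegral.intervalIntegrable_rpow' (by linarith)).mul_continuousOn (hIcc ▸ hv.pow 2)
  have hB : IntervalIntegrable (fun r => r ^ n * (v r * v' r)) volume 0 R :=
    ((Real.continuous_rpow_const hn.le).continuousOn.mul (hv.mul hv')).intervalIntegrable_of_Icc
      hR
  have hFTC := intervalIntegral.integral_eq_sub_of_hasDerivAt_of_le
    (f := fun r => r ^ n * v r ^ 2) hR
    ((Real.continuous_rpow_const hn.le).continuousOn.mul (hv.pow 2))
    (fun r hr => ((Real.hasDerivAt_rpow_const (Or.inl hr.1.ne')).fun_mul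
        ((hderiv r hr).fun_pow 2)).congr_deriv (by norm_num; ring))
    ((hA.const_mul n).add (hB.const_mul 2))
  rw [intervalIntegral.integral_add (hA.const_mul n) (hB.const_mul 2),
    intervalIntegral.integral_const_mul, intervalIntegral.integral_const_mul, hvR,
    Real.zero_rpow hn.ne'] at hFTC
  linarith

theorem sq_integral_rpow_mul_le {v : ℝ → ℝ} {n R : ℝ} (hn : 0 < n) (hR : 0 ≤ R)
    (hv : ContinuousOn v (Icc 0 R)) :
    (∫ r in 0..R, r ^ n * v r) ^ 2 ≤
      R ^ (n + 2) / (n + 2) * ∫ r in 0..R, r ^ (n - 1) * v r ^ 2 := by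
  have hIcc : uIcc 0 R = Icc 0 R := uIcc_of_le hR
  have hw : IntervalIntegrable (fun r : ℝ => r ^ (n - 1)) volume 0 R :=
    intervalIntegral.intervalIntegrable_rpow' (by linarith)
  have hId : ContinuousOn (fun r : ℝ => r) (Icc 0 R) := continuousOn_id
  have hCS := sq_intervalIntegral_mul_le_of_nonneg_weight hR
    (fun r hr => Real.rpow_nonneg hr.1 (n - 1)) (hw.mul_continuousOn (hIcc ▸ hId.pow 2))
    (hw.mul_continuousOn (hIcc ▸ hId.mul hv)) (hw.mul_continuousOn (hIcc ▸ hv.pow 2))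
  have hmoment : ∫ r in 0..R, r ^ (n - 1) * r ^ 2 = R ^ (n + 2) / (n + 2) := by
    rw [intervalIntegral.integral_congr (g := fun r => r ^ (n + 1)) fun r hr => by
        rw [hIcc] at hr
        simp only
        rw [← Real.rpow_two, ← Real.rpow_add' hr.1 (by linarith)]
        ring_nf,
      integral_rpow (Or.inl (by linarith)), Real.zero_rpow (by linarith)]
    ring_nf
  have hweight : ∫ r in 0..R, r ^ (n - 1) * (r * v r) = ∫ r in 0..R, r ^ n * v r :=
    intervalIntegral.integral_congr fun r hr => by
      rw [hIcc] at hr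
      rw [← mul_assoc, ← Real.rpow_add_one' hr.1 (by linarith), sub_add_cancel]
  rwa [hmoment, hweight] at hCS

theorem mul_sq_integral_rpow_mul_le_of_burgers {v v' a : ℝ → ℝ} {n R : ℝ} (hn : 0 < n)
    (hR : 0 < R) (hv : ContinuousOn v (Icc 0 R)) (hv' : ContinuousOn v' (Icc 0 R))
    (ha : ContinuousOn a (Icc 0 R)) (hderiv : ∀ r ∈ Ioo 0 R, HasDerivAt v (v' r) r)
    (hvR : v R = 0) (hburgers : ∀ r ∈ Ioo 0 R, 0 ≤ a r + v r * v' r) :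
    n * (n + 2) / (2 * R ^ (n + 2)) * (∫ r in 0..R, r ^ n * v r) ^ 2 ≤
      ∫ r in 0..R, r ^ n * a r := by
  have hpow : ContinuousOn (fun r : ℝ => r ^ n) (Icc 0 R) :=
    (Real.continuous_rpow_const hn.le).continuousOn
  have hIa : IntervalIntegrable (fun r => r ^ n * a r) volume 0 R :=
    (hpow.mul ha).intervalIntegrable_of_Icc hR.le
  have hIvv : IntervalIntegrable (fun r => r ^ n * (v r * v' r)) volume 0 R :=
    (hpow.mul (hv.mul hv')).intervalIntegrable_of_Icc hR.le
  have hsum : 0 ≤ (∫ r in 0..R, r ^ n * a r) + ∫ r in 0..R, r ^ n * (v r * v' r) := by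
    have h := intervalIntegral.integral_mono_on_of_le_Ioo hR.le intervalIntegrable_const
      (hIa.add hIvv) fun r hr => by
        simpa only [← mul_add] using mul_nonneg (Real.rpow_nonneg hr.1.le n) (hburgers r hr)
    rwa [intervalIntegral.integral_zero, intervalIntegral.integral_add hIa hIvv] at h
  calc n * (n + 2) / (2 * R ^ (n + 2)) * (∫ r in 0..R, r ^ n * v r) ^ 2
      ≤ n * (n + 2) / (2 * R ^ (n + 2)) *
          (R ^ (n + 2) / (n + 2) * ∫ r in 0..R, r ^ (n - 1) * v r ^ 2) := by
        gcongr
        exact sq_integral_rpow_mul_le hn hR.le hv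
    _ = -∫ r in 0..R, r ^ n * (v r * v' r) := by
        rw [integral_rpow_mul_mul_deriv_eq hn hR.le hv hv' hderiv hvR]
        field_simp
    _ ≤ ∫ r in 0..R, r ^ n * a r := by linarith

theorem lt_inv_of_hasDerivAt_ge_mul_sq {H H' : ℝ → ℝ} {c T : ℝ} (hc : 0 < c) (hT : 0 ≤ T)
    (hcont : ContinuousOn H (Icc 0 T)) (hderiv : ∀ t ∈ Ioo 0 T, HasDerivAt H (H' t) t)
    (hineq : ∀ t ∈ Ioo 0 T, c * H t ^ 2 ≤ H' t) (hpos : 0 < H 0) :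
    T < (c * H 0)⁻¹ := by
  have hint : interior (Icc 0 T) = Ioo 0 T := interior_Icc
  have h0 : (0 : ℝ) ∈ Icc 0 T := left_mem_Icc.2 hT
  have hmono : MonotoneOn H (Icc 0 T) :=
    monotoneOn_of_hasDerivWithinAt_nonneg (convex_Icc 0 T) hcont
      (fun t ht => (hderiv t (hint ▸ ht)).hasDerivWithinAt)
      fun t ht => (mul_nonneg hc.le (sq_nonneg _)).trans (hineq t (hint ▸ ht))
  have hHpos : ∀ t ∈ Icc 0 T, 0 < H t := fun t ht => hpos.trans_le (hmono h0 ht ht.1)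
  -- the Riccati comparison `(1 / H)' = -H' / H ^ 2 ≤ -c`
  have hG : MonotoneOn (fun t => -(H t)⁻¹ - c * t) (Icc 0 T) := by
    refine monotoneOn_of_hasDerivWithinAt_nonneg (f' := fun t => H' t / H t ^ 2 - c)
      (convex_Icc 0 T)
      ((hcont.inv₀ fun t ht => (hHpos t ht).ne').neg.sub (by fun_prop))
      (fun t ht => ?_) fun t ht => ?_
    · have hH := hHpos t (Ioo_subset_Icc_self (hint ▸ ht))
      refine (((hderiv t (hint ▸ ht)).inv hH.ne').neg.sub ((hasDerivAt_id t).const_mul c)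
        ).hasDerivWithinAt.congr_deriv ?_
      simp [neg_div]
    · have hH := hHpos t (Ioo_subset_Icc_self (hint ▸ ht))
      rw [sub_nonneg, le_div_iff₀ (by positivity)]
      exact hineq t (hint ▸ ht)
  have hGT := hG h0 (right_mem_Icc.2 hT) hT
  have hHT := hHpos T (right_mem_Icc.2 hT)
  simp only [mul_zero, sub_zero] at hGT
  rw [mul_inv, inv_mul_eq_div, lt_div_iff₀ hc]
  linarith [inv_pos.2 hHT]

theorem alphaConst_nonneg (N : ℕ) : 0 ≤ alphaConst N := by
  unfold alphaConst
  split_ifs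
  · norm_num
  · positivity
  · rcases Nat.lt_or_ge N 2 with hN | hN
    · obtain rfl : N = 0 := by omega
      simp
    · have hN' : (2 : ℝ) ≤ N := by exact_mod_cast hN
      have := Real.Gamma_pos_of_pos (by positivity : (0 : ℝ) < N / 2 + 1)
      have : 0 ≤ (N : ℝ) - 2 := by linarith
      positivity

theorem repulsive_force_nonneg {ρ : ℝ → ℝ} (hρ : ∀ s, 0 ≤ ρ s) (N : ℕ) {r : ℝ} (hr : 0 ≤ r) :
    0 ≤ alphaConst N * r ^ ((1 : ℝ) - N) * ∫ s in (0 : ℝ)..r, ρ s * s ^ (N - 1) :=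
  mul_nonneg (mul_nonneg (alphaConst_nonneg N) (Real.rpow_nonneg hr _))
    (intervalIntegral.integral_nonneg hr fun s hs => mul_nonneg (hρ s) (pow_nonneg hs.1 _))

section RadialField

variable {V : ℝ → ℝ → ℝ} {n R T t : ℝ}

theorem continuousOn_integral_rpow_mul (hn : 0 ≤ n) (hR : 0 ≤ R)
    (hV : ContinuousOn (uncurry V) (Icc 0 T ×ˢ Ici 0)) :
    ContinuousOn (fun τ => ∫ r in 0..R, r ^ n * V τ r) (Icc 0 T) :=
  continuousOn_intervalIntegral_of_continuousOn_prod (F := fun τ r => r ^ n * V τ r)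
    isCompact_Icc hR (((Real.continuous_rpow_const hn).comp continuous_snd).continuousOn.mul
      (hV.mono (prod_mono subset_rfl Icc_subset_Ici_self)))

theorem hasDerivAt_integral_rpow_mul (hn : 0 ≤ n) (hR : 0 ≤ R)
    (hV : ContDiffOn ℝ 1 (uncurry V) (Icc 0 T ×ˢ Ici 0)) (ht : t ∈ Ioo 0 T) :
    HasDerivAt (fun τ => ∫ r in 0..R, r ^ n * V τ r)
      (∫ r in 0..R, r ^ n * fderivWithin ℝ (uncurry V) (Icc 0 T ×ˢ Ici 0) (t, r) (1, 0)) t := by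
  have hK : Icc 0 T ×ˢ Icc 0 R ⊆ Icc 0 T ×ˢ Ici 0 := prod_mono subset_rfl Icc_subset_Ici_self
  have hpow : Continuous fun p : ℝ × ℝ => p.2 ^ n :=
    (Real.continuous_rpow_const hn).comp continuous_snd
  have hW := hV.continuousOn_fderivWithin
    ((uniqueDiffOn_Icc (ht.1.trans ht.2)).prod (uniqueDiffOn_Ici 0)) le_rfl
  refine hasDerivAt_intervalIntegral_of_continuousOn_prod (F := fun τ r => r ^ n * V τ r)
    (F' := fun τ r => r ^ n * fderivWithin ℝ (uncurry V) (Icc 0 T ×ˢ Ici 0) (τ, r) (1, 0))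
    isCompact_Icc (Icc_mem_nhds ht.1 ht.2) hR (hpow.continuousOn.mul (hV.continuousOn.mono hK))
    (hpow.continuousOn.mul ((hW.clm_apply continuousOn_const).mono hK)) ?_
  filter_upwards [isOpen_Ioo.mem_nhds ht] with τ hτ r hr
  exact ((hV.hasFDerivAt_fderivWithin (prod_mem_nhds (Icc_mem_nhds hτ.1 hτ.2)
    (Ici_mem_nhds hr.1))).hasDerivAt_uncurry_left).const_mul _

theorem mul_sq_integral_rpow_mul_le_of_contDiffOn (hn : 0 < n) (hR : 0 < R)
    (hV : ContDiffOn ℝ 1 (uncurry V) (Icc 0 T ×ˢ Ici 0)) (ht : t ∈ Ioo 0 T) (hVR : V t R = 0)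
    (hburgers : ∀ r ∈ Ioo 0 R,
      0 ≤ deriv (fun τ => V τ r) t + V t r * deriv (fun s => V t s) r) :
    n * (n + 2) / (2 * R ^ (n + 2)) * (∫ r in 0..R, r ^ n * V t r) ^ 2 ≤
      ∫ r in 0..R, r ^ n * fderivWithin ℝ (uncurry V) (Icc 0 T ×ˢ Ici 0) (t, r) (1, 0) := by
  set W := fderivWithin ℝ (uncurry V) (Icc 0 T ×ˢ Ici 0)
  have hW : ContinuousOn W (Icc 0 T ×ˢ Ici 0) :=
    hV.continuousOn_fderivWithin
      ((uniqueDiffOn_Icc (ht.1.trans ht.2)).prod (uniqueDiffOn_Ici 0)) le_rfl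
  have hslice {f : ℝ → ℝ → ℝ} (hf : ContinuousOn (uncurry f) (Icc 0 T ×ˢ Ici 0)) :
      ContinuousOn (f t) (Icc 0 R) :=
    (hf.uncurry_left t (Ioo_subset_Icc_self ht)).mono Icc_subset_Ici_self
  have hWat {r : ℝ} (hr : r ∈ Ioo 0 R) : HasFDerivAt (uncurry V) (W (t, r)) (t, r) :=
    hV.hasFDerivAt_fderivWithin (prod_mem_nhds (Icc_mem_nhds ht.1 ht.2) (Ici_mem_nhds hr.1))
  refine mul_sq_integral_rpow_mul_le_of_burgers hn hR (hslice hV.continuousOn)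
    (hslice (f := fun τ r => W (τ, r) (0, 1)) (hW.clm_apply continuousOn_const))
    (hslice (f := fun τ r => W (τ, r) (1, 0)) (hW.clm_apply continuousOn_const))
    (fun r hr => (hWat hr).hasDerivAt_uncurry_right) hVR fun r hr => ?_
  simpa only [(hWat hr).hasDerivAt_uncurry_left.deriv, (hWat hr).hasDerivAt_uncurry_right.deriv]
    using hburgers r hr

end RadialField

theorem blowup_eulerPoisson_repulsive_pressureless_general
    (N : ℕ) (n R H₀ T : ℝ)
    (hn : 0 < n) (hR : 0 < R) (hH₀ : 0 < H₀)
    (hT : T = 2 * R ^ (n + 2) / (n * (n + 1) * H₀))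
    (ρ V : ℝ → ℝ → ℝ)
    (hVC1 : ContDiffOn ℝ 1 (Function.uncurry V) (Set.Icc 0 T ×ˢ Set.Ici 0))
    (hρnn : ∀ t r, 0 ≤ ρ t r)
    (hsupp : ∀ t r, R ≤ r → ρ t r = 0 ∧ V t r = 0)
    (hmom : ∀ t ∈ Set.Icc (0:ℝ) T, ∀ r ∈ Set.Ioo (0:ℝ) R,
      deriv (fun τ => V τ r) t + V t r * deriv (fun s => V t s) r
      = alphaConst N * r ^ ((1:ℝ) - N) * ∫ s in (0:ℝ)..r, ρ t s * s ^ (N - 1))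
    (hH0 : (∫ r in (0:ℝ)..R, r ^ n * V 0 r) = H₀) :
    False := by
  have hT0 : 0 ≤ T := by rw [hT]; positivity
  have hlifespan := lt_inv_of_hasDerivAt_ge_mul_sq (by positivity) hT0
    (continuousOn_integral_rpow_mul hn.le hR.le hVC1.continuousOn)
    (fun t ht => hasDerivAt_integral_rpow_mul hn.le hR.le hVC1 ht)
    (fun t ht => mul_sq_integral_rpow_mul_le_of_contDiffOn hn hR hVC1 ht (hsupp t R le_rfl).2
      fun r hr => hmom t (Ioo_subset_Icc_self ht) r hr ▸ repulsive_force_nonneg (hρnn t) N hr.1.le)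
    (hH0 ▸ hH₀)
  have hTlarge : (n * (n + 2) / (2 * R ^ (n + 2)) * H₀)⁻¹ < T := by
    rw [hT, show (n * (n + 2) / (2 * R ^ (n + 2)) * H₀)⁻¹ = 2 * R ^ (n + 2) / (n * (n + 2) * H₀)
      by field_simp]
    gcongr
    linarith
  exact lt_asymm (hH0 ▸ hlifespan) hTlarge

/-- Blowup on or before `T = 2R^{n+2}/(n(n+1)H₀)` for the `C¹` solutions of the
`N`-dimensional pressureless Euler–Poisson equations with repulsive forces (`δ = 1`),
in radial symmetry, with compact support in `[0,R]` and initial functional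
`H₀ = ∫₀^R rⁿ V₀ dr > 0`: no such solution exists on all of `[0,T]`. -/
theorem blowup_eulerPoisson_repulsive_pressureless
    (N : ℕ) (hN : 1 ≤ N) (n R H₀ T : ℝ)
    (hn : 0 < n) (hR : 0 < R) (hH₀ : 0 < H₀)
    (hT : T = 2 * R ^ (n + 2) / (n * (n + 1) * H₀))
    (ρ V : ℝ → ℝ → ℝ)
    (hρC1 : ContDiffOn ℝ 1 (Function.uncurry ρ) (Set.Icc 0 T ×ˢ Set.Ici 0))
    (hVC1 : ContDiffOn ℝ 1 (Function.uncurry V) (Set.Icc 0 T ×ˢ Set.Ici 0))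
    (hρnn : ∀ t r, 0 ≤ ρ t r)
    (hsupp : ∀ t r, R ≤ r → ρ t r = 0 ∧ V t r = 0)
    (hmom : ∀ t ∈ Set.Icc (0:ℝ) T, ∀ r ∈ Set.Ioo (0:ℝ) R,
      deriv (fun τ => V τ r) t + V t r * deriv (fun s => V t s) r
      = alphaConst N * r ^ ((1:ℝ) - N) * ∫ s in (0:ℝ)..r, ρ t s * s ^ (N - 1))
    (hH0 : (∫ r in (0:ℝ)..R, r ^ n * V 0 r) = H₀) :
    False :=
  blowup_eulerPoisson_repulsive_pressureless_general N n R H₀ T hn hR hH₀ hT ρ V hVC1 hρnn hsupp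
    hmom hH0
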